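/- Let E be a finite-dimensional real normed space and K ⊆ E a nonempty bounded set with diam K > 0. Then ⋂ {Ch(K^c) : K^c a completion of K} ⊆ Ch(K) ⊆ ⋃ {Ch(K^c) : K^c a completion of K}. -/
import Mathlib


open Metric Set

variable {E : Type*} [NormedAddCommGroup E] [NormedSpace ℝ E] [FiniteDimensional ℝ E]

/-- The Chebyshev radius of a set: the smallest `r` such that `K` is contained
in a closed ball of radius `r`. -/
noncomputable def chebRadius (K : Set E) : ℝ :=
  sInf {r : ℝ | ∃ x : E, K ⊆ Metric.closedBall x r}

/-- The `r`-ball intersection of `K`. -/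
def ballInt (K : Set E) (r : ℝ) : Set E :=
  ⋂ x ∈ K, Metric.closedBall x r

/-- The `r`-ball hull of `K`. -/
def ballHull (K : Set E) (r : ℝ) : Set E :=
  ⋂ x ∈ {x : E | K ⊆ Metric.closedBall x r}, Metric.closedBall x r

/-- The Chebyshev set of `K`: centers of minimal enclosing balls of `K`. -/
noncomputable def chebSet (K : Set E) : Set E :=
  {x : E | K ⊆ Metric.closedBall x (chebRadius K)}

/-- A bounded set is (diametrically) complete if adding any new point
increases its diameter. -/
def IsDiamComplete (C : Set E) : Prop :=
  Bornology.IsBounded C ∧ ∀ x ∉ C, Metric.diam C < Metric.diam (C ∪ {x})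

/-- `Kc` is a completion of `K`: a complete set containing `K` with the same diameter. -/
def IsCompletion (Kc K : Set E) : Prop :=
  IsDiamComplete Kc ∧ K ⊆ Kc ∧ Metric.diam Kc = Metric.diam K

/-- The critical set of `K` with respect to a Chebyshev center `x`. -/
noncomputable def critSet (K : Set E) (x : E) : Set E :=
  K ∩ Metric.sphere x (chebRadius K)

section Aux

variable {K : Set E}

lemma chebAux_mem_nonneg (hK : K.Nonempty) {r : ℝ}
    (hr : r ∈ {r : ℝ | ∃ x : E, K ⊆ Metric.closedBall x r}) : 0 ≤ r := by
  obtain ⟨x, hx⟩ := hr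
  obtain ⟨k, hk⟩ := hK
  have := hx hk
  rw [Metric.mem_closedBall] at this
  exact le_trans dist_nonneg this

lemma chebAux_bddBelow (hK : K.Nonempty) :
    BddBelow {r : ℝ | ∃ x : E, K ⊆ Metric.closedBall x r} :=
  ⟨0, fun r hr => chebAux_mem_nonneg hK hr⟩

lemma chebAux_nonempty (hb : Bornology.IsBounded K) (c : E) :
    {r : ℝ | ∃ x : E, K ⊆ Metric.closedBall x r}.Nonempty := by
  obtain ⟨r, hr⟩ := (Metric.isBounded_iff_subset_closedBall c).1 hb
  exact ⟨r, c, hr⟩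

lemma chebRadius_le_diam (hK : K.Nonempty) (hb : Bornology.IsBounded K) :
    chebRadius K ≤ Metric.diam K := by
  obtain ⟨k, hk⟩ := hK
  apply csInf_le (chebAux_bddBelow ⟨k, hk⟩)
  exact ⟨k, fun y hy => Metric.mem_closedBall.2 (Metric.dist_le_diam_of_mem hb hy hk)⟩

lemma diam_le_two_chebRadius (hK : K.Nonempty) (hb : Bornology.IsBounded K) :
    Metric.diam K ≤ 2 * chebRadius K := by
  have h : ∀ r ∈ {r : ℝ | ∃ x : E, K ⊆ Metric.closedBall x r}, Metric.diam K / 2 ≤ r := by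
    rintro r ⟨x, hx⟩
    have : Metric.diam K ≤ 2 * r := by
      have h0r : (0:ℝ) ≤ r := chebAux_mem_nonneg hK ⟨x, hx⟩
      apply Metric.diam_le_of_forall_dist_le (by linarith)
      intro p hp q hq
      calc dist p q ≤ dist p x + dist x q := dist_triangle p x q
        _ ≤ r + r := add_le_add (hx hp) (by rw [dist_comm]; exact hx hq)
        _ = 2 * r := by ring
    linarith
  have := le_csInf (chebAux_nonempty hb (Classical.choice (by infer_instance : Nonempty E))) h
  unfold chebRadius
  linarith

/-- `chebRadius` is monotone. -/
lemma chebRadius_mono {C : Set E} (hK : K.Nonempty) (hKC : K ⊆ C)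
    (hC : Bornology.IsBounded C) : chebRadius K ≤ chebRadius C := by
  apply le_csInf (chebAux_nonempty hC (Classical.choice (by infer_instance : Nonempty E)))
  rintro r ⟨x, hx⟩
  exact csInf_le (chebAux_bddBelow hK) ⟨x, hKC.trans hx⟩

/-- Existence of a Chebyshev center, by compactness. -/
lemma exists_cheb_center (hK : K.Nonempty) (hb : Bornology.IsBounded K) :
    ∃ x : E, K ⊆ Metric.closedBall x (chebRadius K) := by
  obtain ⟨k₀, hk₀⟩ := hK
  set r := chebRadius K with hr
  have hxn : ∀ n : ℕ, ∃ x : E, K ⊆ Metric.closedBall x (r + 1 / (n + 1)) := by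
    intro n
    have hε : (0:ℝ) < 1 / ((n : ℝ) + 1) := by positivity
    obtain ⟨a, ⟨x, hx⟩, ha⟩ := Real.lt_sInf_add_pos (chebAux_nonempty hb k₀) hε
    exact ⟨x, hx.trans (Metric.closedBall_subset_closedBall ha.le)⟩
  choose x hx using hxn
  have hr0 : 0 ≤ r := le_csInf (chebAux_nonempty hb k₀) (fun a ha => chebAux_mem_nonneg ⟨k₀, hk₀⟩ ha)
  have hmem : ∀ n, x n ∈ Metric.closedBall k₀ (r + 1) := by
    intro n
    rw [Metric.mem_closedBall, dist_comm]
    have h1 : dist k₀ (x n) ≤ r + 1 / (n + 1) := hx n hk₀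
    have h2 : (1:ℝ) / (n + 1) ≤ 1 := by
      rw [div_le_one (by positivity)]
      linarith [Nat.cast_nonneg (α := ℝ) n]
    linarith
  obtain ⟨a, _, φ, hφ, hconv⟩ := (isCompact_closedBall k₀ (r + 1)).tendsto_subseq hmem
  refine ⟨a, fun k hk => Metric.mem_closedBall.2 ?_⟩
  have h1 : Filter.Tendsto (fun n => dist k (x (φ n))) Filter.atTop (nhds (dist k a)) :=
    Filter.Tendsto.dist tendsto_const_nhds hconv
  have h2 : Filter.Tendsto (fun n => r + 1 / ((φ n : ℝ) + 1)) Filter.atTop (nhds (r + 0)) := by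
    apply Filter.Tendsto.const_add
    exact tendsto_one_div_add_atTop_nhds_zero_nat.comp hφ.tendsto_atTop
  rw [add_zero] at h2
  exact le_of_tendsto_of_tendsto' h1 h2 (fun n => hx (φ n) hk)

/-- Main lemma: there is a completion of `K` inside any minimal enclosing ball. -/
lemma exists_completion_subset_ball (hK : K.Nonempty) (hb : Bornology.IsBounded K)
    (hd : 0 < Metric.diam K) {x : E} (hx : K ⊆ Metric.closedBall x (chebRadius K)) :
    ∃ C : Set E, IsCompletion C K ∧ C ⊆ Metric.closedBall x (chebRadius K) := by
  set r := chebRadius K with hrdef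
  set d := Metric.diam K with hddef
  have hrd : r ≤ d := chebRadius_le_diam hK hb
  have hdr : d ≤ 2 * r := diam_le_two_chebRadius hK hb
  have hr0 : 0 < r := by linarith
  set S : Set (Set E) := {C | K ⊆ C ∧ C ⊆ Metric.closedBall x r ∧ Metric.diam C ≤ d} with hS
  have hKS : K ∈ S := ⟨subset_rfl, hx, le_rfl⟩
  have hchain : ∀ c ⊆ S, IsChain (· ⊆ ·) c → c.Nonempty → ∃ ub ∈ S, ∀ s ∈ c, s ⊆ ub := by
    intro c hcS hchain ⟨C₀, hC₀⟩
    refine ⟨⋃₀ c, ⟨(hcS hC₀).1.trans (subset_sUnion_of_mem hC₀), ?_, ?_⟩,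
      fun s hs => subset_sUnion_of_mem hs⟩
    · exact sUnion_subset fun s hs => (hcS hs).2.1
    · apply Metric.diam_le_of_forall_dist_le hd.le
      rintro p ⟨A, hA, hpA⟩ q ⟨B, hB, hqB⟩
      rcases hchain.total hA hB with h | h
      · exact le_trans (Metric.dist_le_diam_of_mem
          ((Metric.isBounded_closedBall).subset (hcS hB).2.1) (h hpA) hqB) (hcS hB).2.2
      · exact le_trans (Metric.dist_le_diam_of_mem
          ((Metric.isBounded_closedBall).subset (hcS hA).2.1) hpA (h hqB)) (hcS hA).2.2
  obtain ⟨C, hKC, hmax⟩ := zorn_subset_nonempty S hchain K hKS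
  obtain ⟨hCK, hCball, hCdiam⟩ := hmax.prop
  have hCb : Bornology.IsBounded C := Metric.isBounded_closedBall.subset hCball
  have hCd : Metric.diam C = d := le_antisymm hCdiam (Metric.diam_mono hCK hCb)
  -- key step: any point within distance d of all of C and inside the ball is in C
  have hins : ∀ y : E, y ∈ Metric.closedBall x r → (∀ c ∈ C, dist y c ≤ d) → y ∈ C := by
    intro y hyball hyd
    have : C ∪ {y} ∈ S := by
      refine ⟨hCK.trans subset_union_left, union_subset hCball (by simpa using hyball), ?_⟩
      apply Metric.diam_le_of_forall_dist_le hd.le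
      rintro p (hp | hp) q (hq | hq)
      · exact le_trans (Metric.dist_le_diam_of_mem hCb hp hq) hCdiam
      · rw [mem_singleton_iff] at hq; rw [hq, dist_comm]; exact hyd p hp
      · rw [mem_singleton_iff] at hp; rw [hp]; exact hyd q hq
      · rw [mem_singleton_iff] at hp hq; rw [hp, hq, dist_self]; exact hd.le
    have := hmax.2 this subset_union_left
    exact this (mem_union_right C rfl)
  refine ⟨C, ⟨⟨hCb, ?_⟩, hCK, hCd⟩, hCball⟩
  intro y hy
  have hub : Bornology.IsBounded (C ∪ {y}) := hCb.union (Bornology.isBounded_singleton)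
  by_cases hfar : ∃ c ∈ C, d < dist y c
  · obtain ⟨c, hc, hdc⟩ := hfar
    calc Metric.diam C = d := hCd
      _ < dist y c := hdc
      _ ≤ Metric.diam (C ∪ {y}) :=
        Metric.dist_le_diam_of_mem hub (mem_union_right C rfl) (mem_union_left _ hc)
  · push_neg at hfar
    exfalso
    by_cases hyball : y ∈ Metric.closedBall x r
    · exact hy (hins y hyball hfar)
    · -- y outside the ball: contradiction via the point c* = x - (d-r)•u
      rw [Metric.mem_closedBall, not_le, dist_eq_norm] at hyball
      have hyx : (0:ℝ) < ‖y - x‖ := by linarith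
      set u : E := ‖y - x‖⁻¹ • (y - x) with hu
      set cs : E := x - (d - r) • u with hcs
      have hnn : (0:ℝ) ≤ (d - r) * ‖y - x‖⁻¹ :=
        mul_nonneg (by linarith) (inv_nonneg.2 (norm_nonneg _))
      have hcsx : dist cs x = d - r := by
        have h0 : cs - x = -(((d - r) * ‖y - x‖⁻¹) • (y - x)) := by
          rw [hcs, hu, smul_smul]; abel
        rw [dist_eq_norm, h0, norm_neg, norm_smul, Real.norm_eq_abs, abs_of_nonneg hnn]
        field_simp
      have hcsball : cs ∈ Metric.closedBall x r := by
        rw [Metric.mem_closedBall, hcsx]; linarith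
      have hcsC : cs ∈ C := by
        apply hins cs hcsball
        intro c hc
        calc dist cs c ≤ dist cs x + dist x c := dist_triangle cs x c
          _ ≤ (d - r) + r := add_le_add hcsx.le (by rw [dist_comm]; exact hCball hc)
          _ = d := by ring
      have hkey : dist y cs = ‖y - x‖ + (d - r) := by
        have h1 : y - cs = (1 + (d - r) * ‖y - x‖⁻¹) • (y - x) := by
          rw [add_smul, one_smul, hcs, hu, smul_smul]; abel
        rw [dist_eq_norm, h1, norm_smul, Real.norm_eq_abs,
          abs_of_nonneg (by linarith : (0:ℝ) ≤ 1 + (d - r) * ‖y - x‖⁻¹)]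
        field_simp
      have := hfar cs hcsC
      rw [hkey] at this
      linarith

end Aux

theorem chebSet_between_inter_and_union_of_completions (K : Set E)
    (hK : K.Nonempty) (hb : Bornology.IsBounded K) (hd : 0 < Metric.diam K) :
    (⋂ Kc ∈ {C : Set E | IsCompletion C K}, chebSet Kc) ⊆ chebSet K ∧
      chebSet K ⊆ ⋃ Kc ∈ {C : Set E | IsCompletion C K}, chebSet Kc := by
  have key : ∀ x ∈ chebSet K, ∃ C : Set E, IsCompletion C K ∧ x ∈ chebSet C ∧
      chebRadius C = chebRadius K := by
    intro x hx
    obtain ⟨C, hcomp, hCball⟩ := exists_completion_subset_ball hK hb hd hx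
    have hCb : Bornology.IsBounded C := hcomp.1.1
    have hrad : chebRadius C = chebRadius K := by
      refine le_antisymm ?_ (chebRadius_mono hK hcomp.2.1 hCb)
      exact csInf_le (chebAux_bddBelow (hK.mono hcomp.2.1)) ⟨x, hCball⟩
    refine ⟨C, hcomp, ?_, hrad⟩
    show C ⊆ Metric.closedBall x (chebRadius C)
    rw [hrad]; exact hCball
  constructor
  · -- intersection ⊆ chebSet K
    intro z hz
    obtain ⟨x₀, hx₀⟩ := exists_cheb_center hK hb
    obtain ⟨C, hcomp, _, hrad⟩ := key x₀ hx₀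
    have hzC : z ∈ chebSet C := by
      have := mem_iInter₂.1 hz C
      exact this hcomp
    show K ⊆ Metric.closedBall z (chebRadius K)
    rw [← hrad]
    exact hcomp.2.1.trans hzC
  · -- chebSet K ⊆ union
    intro x hx
    obtain ⟨C, hcomp, hxC, _⟩ := key x hx
    exact mem_iUnion₂.2 ⟨C, hcomp, hxC⟩
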